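/- arXiv:1901.09285 — 5 statements merged into one kernel-verified Lean document; each statement's English description precedes it below -/
import Mathlib

section
/- Fix k ≥ 1 and θ ∈ (0,1). The function P(μ) = (k + μ θ^{k+μ})/(k + μ) is strictly convex on [0,∞). -/
/-!
With `s = k + μ` and `θ ^ s = exp (c * s)`, `c = log θ < 0`, the function is
`exp (c * s) + k * (1 - exp (c * s)) / s`. The first summand is strictly convex. The second is
convex for `s > 0`: its second derivative is `k * (2 - exp (c * s) * (c²s² - 2cs + 2)) / s³`,
which is nonnegative because `exp t ≥ 1 + t + t² / 2` for `t = -c * s ≥ 0`.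
-/

open Real Set

theorem strictConvexOn_exp_mul {c : ℝ} (hc : c ≠ 0) :
    StrictConvexOn ℝ univ fun s => exp (c * s) := by
  refine ⟨convex_univ, fun x _ y _ hxy a b ha hb hab => ?_⟩
  have hcxy : c * x ≠ c * y := (mul_right_injective₀ hc).ne hxy
  simpa only [smul_eq_mul, mul_add, mul_left_comm c] using
    strictConvexOn_exp.2 (mem_univ _) (mem_univ _) hcxy ha hb hab

theorem exp_mul_sq_sub_two_mul_add_two_le {x : ℝ} (hx : x ≤ 0) :
    exp x * (x ^ 2 - 2 * x + 2) ≤ 2 := by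
  have hq := quadratic_le_exp_of_nonneg (neg_nonneg.2 hx)
  have hinv : exp x * exp (-x) = 1 := by rw [← exp_add, add_neg_cancel, exp_zero]
  nlinarith [exp_pos x]

theorem convexOn_one_sub_exp_mul_div {c : ℝ} (hc : c ≤ 0) :
    ConvexOn ℝ (Ioi 0) fun s => (1 - exp (c * s)) / s := by
  have hE (s : ℝ) : HasDerivAt (fun s => exp (c * s)) (c * exp (c * s)) s := by
    simpa [mul_comm] using ((hasDerivAt_id s).const_mul c).exp
  refine convexOn_of_hasDerivWithinAt2_nonneg (convex_Ioi 0)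
    (f' := fun s => (exp (c * s) * (1 - c * s) - 1) / s ^ 2)
    (f'' := fun s => (2 - exp (c * s) * ((c * s) ^ 2 - 2 * (c * s) + 2)) / s ^ 3)
    (ContinuousOn.div (by fun_prop) continuousOn_id fun _ hs => hs.ne') ?_ ?_ ?_ <;>
    simp only [interior_Ioi, mem_Ioi]
  · intro s hs
    refine (((hE s).const_sub 1).fun_div (hasDerivAt_id' s) hs.ne').hasDerivWithinAt.congr_deriv ?_
    field_simp
    ring
  · intro s hs
    refine ((((hE s).fun_mul (((hasDerivAt_id' s).const_mul c).const_sub 1)).sub_const 1).fun_div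
      ((hasDerivAt_id' s).fun_pow 2) (pow_ne_zero 2 hs.ne')).hasDerivWithinAt.congr_deriv ?_
    field_simp
    ring
  · intro s hs
    have := exp_mul_sq_sub_two_mul_add_two_le (mul_nonpos_of_nonpos_of_nonneg hc hs.le)
    exact div_nonneg (by linarith) (by positivity)

/-- P(μ) = (k + μ θ^{k+μ})/(k + μ) is strictly convex on [0, ∞)
for integer k ≥ 1 and θ ∈ (0,1). -/
theorem stmt_4 (k : ℕ) (hk : 1 ≤ k) (θ : ℝ) (hθ0 : 0 < θ) (hθ1 : θ < 1) :
    StrictConvexOn ℝ (Set.Ici 0)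
      (fun μ : ℝ => ((k : ℝ) + μ * θ ^ ((k : ℝ) + μ)) / ((k : ℝ) + μ)) := by
  have hc : log θ < 0 := log_neg hθ0 hθ1
  have hk0 : (0 : ℝ) < k := by exact_mod_cast hk
  have hf : StrictConvexOn ℝ (Ioi 0)
      fun s => exp (log θ * s) + k * ((1 - exp (log θ * s)) / s) :=
    ((strictConvexOn_exp_mul hc.ne).subset (subset_univ _) (convex_Ioi 0)).add_convexOn
      ((convexOn_one_sub_exp_mul_div hc.le).smul hk0.le)
  refine ((hf.translate_right k).subset (fun μ hμ => ?_) (convex_Ici 0)).congr fun μ hμ => ?_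
  · show 0 < k + μ
    linarith [mem_Ici.1 hμ]
  · have hμ : (k : ℝ) + μ ≠ 0 := by linarith [mem_Ici.1 hμ]
    simp only [Function.comp, rpow_def_of_pos hθ0]
    field_simp
    ring
end

section
/- Fix k ≥ 1, θ ∈ (0,1), constants α₁, α₂ > 0, and a convex, strictly increasing, differentiable penalty function f: [0,∞) → [0,∞) with f(0) = 0. Then the expected disutility E(μ) = α₁ f(μ) + α₂ c · (k + μ θ^{k+μ})/(k + μ), where c ∈ (0,1] is a constant infection probability, is strictly convex in μ on [0,∞) and attains a unique minimizer μ* ≥ 0. -/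
/-!
Writing `θ ^ (k + μ) = exp (L (k + μ))` with `L = log θ < 0`, the non-vaccination probability
`G μ = (k + μ e^{L(k+μ)}) / (k + μ)` has second derivative
`(2k (1 - e^w + w e^w) + L² μ (k+μ)² e^w) / (k+μ)³` with `w = L (k + μ)`; the first summand is
nonnegative because `1 - w ≤ e^{-w}`, and the second is positive for `μ > 0`. So `G` is strictly
convex, and so is `E = α₁ f + α₂ c G`. A convex `f` that increases somewhere grows at least
linearly, so `E` tends to `+∞`; being continuous, it attains its minimum on `[0, ∞)`, and strict
convexity makes the minimizer unique.
-/

open Real Set Filter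

lemma StrictConvexOn.const_mul {s : Set ℝ} {f : ℝ → ℝ} {c : ℝ} (hf : StrictConvexOn ℝ s f)
    (hc : 0 < c) : StrictConvexOn ℝ s fun x => c * f x := by
  refine ⟨hf.1, fun x hx y hy hxy a b ha hb hab => ?_⟩
  have := mul_lt_mul_of_pos_left (hf.2 hx hy hxy ha hb hab) hc
  simp only [smul_eq_mul] at this ⊢
  linarith

lemma ConvexOn.tendsto_atTop_of_lt {f : ℝ → ℝ} {a b : ℝ} (hf : ConvexOn ℝ (Ici a) f)
    (hab : a < b) (hfab : f a < f b) : Tendsto f atTop atTop := by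
  set s := (f b - f a) / (b - a)
  have hs : 0 < s := div_pos (sub_pos.2 hfab) (sub_pos.2 hab)
  have hlin : Tendsto (fun x => f a + s * (x - a)) atTop atTop :=
    tendsto_atTop_add_const_left _ _ <|
      (tendsto_atTop_add_const_right _ _ tendsto_id).const_mul_atTop hs
  refine tendsto_atTop_mono' _ ?_ hlin
  filter_upwards [eventually_gt_atTop b] with x hbx
  have hax : 0 < x - a := by linarith
  have hslope : s ≤ (f x - f a) / (x - a) :=
    hf.secant_mono self_mem_Ici hab.le (hab.trans hbx).le hab.ne' (hab.trans hbx).ne' hbx.le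
  rw [le_div_iff₀ hax] at hslope
  linarith

lemma ContinuousOn.exists_isMinOn_Ici {g : ℝ → ℝ} {a : ℝ} (hg : ContinuousOn g (Ici a))
    (hlim : Tendsto g atTop atTop) : ∃ x ∈ Ici a, IsMinOn g (Ici a) x := by
  refine hg.exists_isMinOn' isClosed_Ici self_mem_Ici ?_
  rw [cocompact_eq_atBot_atTop, inf_sup_right, (disjoint_atBot_principal_Ici a).eq_bot,
    bot_sup_eq]
  exact (hlim.eventually_ge_atTop (g a)).filter_mono inf_le_left

lemma one_sub_mul_exp_le_one (w : ℝ) : (1 - w) * exp w ≤ 1 := by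
  have := mul_le_mul_of_nonneg_right (add_one_le_exp (-w)) (exp_pos w).le
  rwa [← exp_add, neg_add_cancel, exp_zero, neg_add_eq_sub] at this

/-- `Pr{NV | μ}` for a degree-`k` individual, with `θ ^ (k + μ)` written as `exp (L * (k + μ))`. -/
noncomputable def probNotVaccinated (k L μ : ℝ) : ℝ := (k + μ * exp (L * (k + μ))) / (k + μ)

noncomputable def probNotVaccinatedDeriv (k L μ : ℝ) : ℝ :=
  (exp (L * (k + μ)) * (k + L * μ * (k + μ)) - k) / (k + μ) ^ 2

section probNotVaccinated

variable {k L μ : ℝ}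

lemma hasDerivAt_exp_mul_add (k L μ : ℝ) :
    HasDerivAt (fun μ => exp (L * (k + μ))) (exp (L * (k + μ)) * L) μ := by
  simpa using (((hasDerivAt_id' μ).const_add k).const_mul L).exp

lemma hasDerivAt_probNotVaccinated (hμ : k + μ ≠ 0) :
    HasDerivAt (probNotVaccinated k L) (probNotVaccinatedDeriv k L μ) μ := by
  refine (((hasDerivAt_id' μ).mul (hasDerivAt_exp_mul_add k L μ)).const_add k).div
    ((hasDerivAt_id' μ).const_add k) hμ |>.congr_deriv ?_
  rw [probNotVaccinatedDeriv]
  simp only [Pi.mul_apply]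
  field_simp
  ring

lemma hasDerivAt_probNotVaccinatedDeriv (hμ : k + μ ≠ 0) :
    HasDerivAt (probNotVaccinatedDeriv k L)
      ((2 * k * (1 - exp (L * (k + μ)) + L * (k + μ) * exp (L * (k + μ)))
        + L ^ 2 * μ * (k + μ) ^ 2 * exp (L * (k + μ))) / (k + μ) ^ 3) μ := by
  have hkμ : HasDerivAt (fun μ => k + μ) 1 μ := (hasDerivAt_id' μ).const_add k
  refine ((((hasDerivAt_exp_mul_add k L μ).mul
    (((hasDerivAt_id' μ).const_mul L).mul hkμ |>.const_add k)).sub_const k).div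
    (hkμ.pow 2) (pow_ne_zero 2 hμ)) |>.congr_deriv ?_
  simp only [Pi.mul_apply, Pi.pow_apply]
  field_simp
  ring

lemma strictMonoOn_probNotVaccinatedDeriv (hk : 0 ≤ k) (hL : L ≠ 0) :
    StrictMonoOn (probNotVaccinatedDeriv k L) (Ioi 0) := by
  have hd : ∀ μ ∈ Ioi (0 : ℝ), HasDerivAt (probNotVaccinatedDeriv k L) _ μ := fun μ hμ =>
    hasDerivAt_probNotVaccinatedDeriv (add_pos_of_nonneg_of_pos hk hμ).ne'
  refine strictMonoOn_of_deriv_pos (convex_Ioi 0)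
    (fun μ hμ => (hd μ hμ).continuousAt.continuousWithinAt) ?_
  rw [interior_Ioi]
  intro μ (hμ : 0 < μ)
  rw [(hd μ hμ).deriv]
  have hexp : 0 ≤ 1 - exp (L * (k + μ)) + L * (k + μ) * exp (L * (k + μ)) := by
    linarith [one_sub_mul_exp_le_one (L * (k + μ))]
  positivity

lemma strictConvexOn_probNotVaccinated (hk : 0 < k) (hL : L ≠ 0) :
    StrictConvexOn ℝ (Ici 0) (probNotVaccinated k L) := by
  have hd : ∀ μ ∈ Ici (0 : ℝ), HasDerivAt (probNotVaccinated k L) _ μ := fun μ hμ =>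
    hasDerivAt_probNotVaccinated (add_pos_of_pos_of_nonneg hk hμ).ne'
  refine StrictMonoOn.strictConvexOn_of_deriv (convex_Ici 0)
    (fun μ hμ => (hd μ hμ).continuousAt.continuousWithinAt) ?_
  rw [interior_Ici]
  exact (strictMonoOn_probNotVaccinatedDeriv hk.le hL).congr fun μ hμ =>
    (hd μ (mem_Ici_of_Ioi hμ)).deriv.symm

end probNotVaccinated

theorem stmt_5_general (k : ℕ) (hk : 1 ≤ k) (θ : ℝ) (hθ0 : 0 < θ) (hθ1 : θ < 1)
    (α₁ α₂ c : ℝ) (hα₁ : 0 < α₁) (hα₂ : 0 < α₂) (hc0 : 0 < c)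
    (f : ℝ → ℝ) (hf_conv : ConvexOn ℝ (Set.Ici 0) f)
    (hf_mono : StrictMonoOn f (Set.Ici 0))
    (hf_diff : ∀ μ : ℝ, 0 ≤ μ → DifferentiableAt ℝ f μ)
    (E : ℝ → ℝ)
    (hE : ∀ μ : ℝ, E μ =
      α₁ * f μ + α₂ * c * (((k : ℝ) + μ * θ ^ ((k : ℝ) + μ)) / ((k : ℝ) + μ))) :
    StrictConvexOn ℝ (Set.Ici 0) E ∧
      ∃! μstar : ℝ, μstar ∈ Set.Ici (0 : ℝ) ∧ IsMinOn E (Set.Ici 0) μstar := by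
  have hk' : (0 : ℝ) < k := by exact_mod_cast hk
  have hEeq : E = fun μ => α₁ * f μ + α₂ * c * probNotVaccinated k (log θ) μ := by
    funext μ
    rw [hE, probNotVaccinated, rpow_def_of_pos hθ0]
  have hconv : StrictConvexOn ℝ (Ici 0) E := hEeq ▸ (hf_conv.smul hα₁.le).add_strictConvexOn
    ((strictConvexOn_probNotVaccinated hk' (log_neg hθ0 hθ1).ne).const_mul (mul_pos hα₂ hc0))
  have hcont : ContinuousOn E (Ici 0) := fun μ (hμ : 0 ≤ μ) => by
    rw [hEeq]
    exact (((hf_diff μ hμ).continuousAt.const_mul α₁).add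
      ((hasDerivAt_probNotVaccinated (add_pos_of_pos_of_nonneg hk' hμ).ne').continuousAt.const_mul
        _)).continuousWithinAt
  have hlim : Tendsto E atTop atTop := by
    have hf01 : f 0 < f 1 := hf_mono self_mem_Ici (mem_Ici.2 zero_le_one) zero_lt_one
    refine tendsto_atTop_mono' _ ?_
      ((hf_conv.tendsto_atTop_of_lt zero_lt_one hf01).const_mul_atTop hα₁)
    filter_upwards [eventually_ge_atTop 0] with μ hμ
    rw [hE]
    have : 0 ≤ α₂ * c * (((k : ℝ) + μ * θ ^ ((k : ℝ) + μ)) / ((k : ℝ) + μ)) := by positivity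
    linarith
  obtain ⟨μ₀, hμ₀, hmin⟩ := hcont.exists_isMinOn_Ici hlim
  exact ⟨hconv, μ₀, ⟨hμ₀, hmin⟩, fun μ hμ => hconv.eq_of_isMinOn hμ.2 hmin hμ.1 hμ₀⟩

/-- The expected disutility E(μ) = α₁ f(μ) + α₂ c (k + μ θ^{k+μ})/(k + μ), with f
convex, strictly increasing, differentiable, f(0) = 0 and nonnegative on [0,∞),
is strictly convex on [0,∞) and attains a unique minimizer there. -/
theorem stmt_5 (k : ℕ) (hk : 1 ≤ k) (θ : ℝ) (hθ0 : 0 < θ) (hθ1 : θ < 1)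
    (α₁ α₂ c : ℝ) (hα₁ : 0 < α₁) (hα₂ : 0 < α₂) (hc0 : 0 < c) (hc1 : c ≤ 1)
    (f : ℝ → ℝ) (hf_conv : ConvexOn ℝ (Set.Ici 0) f)
    (hf_mono : StrictMonoOn f (Set.Ici 0))
    (hf_diff : ∀ μ : ℝ, 0 ≤ μ → DifferentiableAt ℝ f μ)
    (hf0 : f 0 = 0) (hf_nonneg : ∀ μ : ℝ, 0 ≤ μ → 0 ≤ f μ)
    (E : ℝ → ℝ)
    (hE : ∀ μ : ℝ, E μ =
      α₁ * f μ + α₂ * c * (((k : ℝ) + μ * θ ^ ((k : ℝ) + μ)) / ((k : ℝ) + μ))) :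
    StrictConvexOn ℝ (Set.Ici 0) E ∧
      ∃! μstar : ℝ, μstar ∈ Set.Ici (0 : ℝ) ∧ IsMinOn E (Set.Ici 0) μstar :=
  stmt_5_general k hk θ hθ0 hθ1 α₁ α₂ c hα₁ hα₂ hc0 f hf_conv hf_mono hf_diff E hE
end

section
/- Let f: [0,∞) → [0,∞) be strongly convex and C¹ with f'(0) = 0, and let k ≥ 1, θ ∈ (0,1), α₁, α₂ > 0, c ∈ (0,1]. Define h(μ) = α₁ f'(μ) + α₂ c · d/dμ[(k + μ θ^{k+μ})/(k + μ)]. Then h has a unique zero μ̃ ∈ (0,∞) (i.e., the first-order condition for the individual's best response has a unique solution). -/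
/-! With `P` the probability of never being vaccinated, `h` is the derivative of the cost
`α₁ f + α₂ c P` on `[0, ∞)`. Writing `s = k + ν`, the second derivative of `P` is nonnegative
because `θ ^ s (1 - s log θ) = e^t (1 - t) ≤ 1` for `t = s log θ`, so `P` is convex and the cost
is `α₁ m`-strongly convex: `h` grows at rate at least `α₁ m`. Since `h 0 = α₂ c P'(0) < 0`, `h`
changes sign, Darboux's theorem gives a zero, and strict monotonicity makes it unique. -/

open Real Set

section StrongConvex

variable {E : Type*} [NormedAddCommGroup E] [NormedSpace ℝ E] {s : Set E} {f g : E → ℝ}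
  {m c : ℝ}

lemma StrongConvexOn.const_smul (hf : StrongConvexOn s m f) (hc : 0 ≤ c) :
    StrongConvexOn s (c * m) (c • f) := by
  refine ⟨hf.1, fun x hx y hy a b ha hb hab ↦ ?_⟩
  have := mul_le_mul_of_nonneg_left (hf.2 hx hy ha hb hab) hc
  simp only [Pi.smul_apply, smul_eq_mul] at this ⊢
  linarith

lemma StrongConvexOn.add_convexOn (hf : StrongConvexOn s m f) (hg : ConvexOn ℝ s g) :
    StrongConvexOn s m (f + g) := by
  have := hf.add hg.uniformConvexOn_zero
  rwa [add_zero] at this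

end StrongConvex

lemma StrongConvexOn.mul_sub_le_sub_of_hasDerivAt {s : Set ℝ} {f : ℝ → ℝ} {m x y a b : ℝ}
    (hf : StrongConvexOn s m f) (hx : x ∈ s) (hy : y ∈ s) (hxy : x < y)
    (hfx : HasDerivAt f a x) (hfy : HasDerivAt f b y) : m * (y - x) ≤ b - a := by
  have hconv : ConvexOn ℝ s fun t ↦ f t - m / 2 * t ^ 2 := by
    simpa [Real.norm_eq_abs, sq_abs] using strongConvexOn_iff_convex.mp hf
  have hquad (t : ℝ) : HasDerivAt (fun t ↦ m / 2 * t ^ 2) (m * t) t :=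
    ((hasDerivAt_pow 2 t).const_mul (m / 2)).congr_deriv (by norm_num; ring)
  have := (hconv.le_slope_of_hasDerivAt hx hy hxy (hfx.sub (hquad x))).trans
    (hconv.slope_le_of_hasDerivAt hx hy hxy (hfy.sub (hquad y)))
  linarith

lemma StrongConvexOn.existsUnique_hasDerivAt_eq_zero {g g' : ℝ → ℝ} {a κ : ℝ}
    (hg : StrongConvexOn (Ici a) κ g) (hκ : 0 < κ) (hg' : ∀ x ∈ Ici a, HasDerivAt g (g' x) x)
    (ha : g' a < 0) : ∃! x, x ∈ Ioi a ∧ g' x = 0 := by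
  have hgap {x y} (hx : x ∈ Ici a) (hxy : x < y) : κ * (y - x) ≤ g' y - g' x :=
    hg.mul_sub_le_sub_of_hasDerivAt hx (le_trans hx hxy.le) hxy (hg' x hx)
      (hg' y (le_trans hx hxy.le))
  have hmono : StrictMonoOn g' (Ici a) := fun x hx y _ hxy ↦ by nlinarith [hgap hx hxy]
  have hab : a < a + (1 - g' a) / κ := lt_add_of_pos_right a (div_pos (by linarith) hκ)
  have hb : 0 < g' (a + (1 - g' a) / κ) := by
    have := hgap self_mem_Ici hab
    rw [add_sub_cancel_left, mul_div_cancel₀ _ hκ.ne'] at this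
    linarith
  obtain ⟨x, hx, hx0⟩ := exists_hasDerivWithinAt_eq_of_gt_of_lt hab.le
    (fun x hx ↦ (hg' x hx.1).hasDerivWithinAt) ha hb
  exact ⟨x, ⟨hx.1, hx0⟩, fun y ⟨hy, hy0⟩ ↦
    hmono.injOn (Ioi_subset_Ici_self hy) (Ioi_subset_Ici_self hx.1) (hy0.trans hx0.symm)⟩

lemma exp_mul_one_sub_le_one (t : ℝ) : exp t * (1 - t) ≤ 1 := by
  calc exp t * (1 - t) ≤ exp t * exp (-t) := by gcongr; exact one_sub_le_exp_neg t
    _ = 1 := by rw [← exp_add, add_neg_cancel, exp_zero]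

lemma hasDerivAt_rpow_const_add {θ : ℝ} (hθ : 0 < θ) (k ν : ℝ) :
    HasDerivAt (fun ν ↦ θ ^ (k + ν)) (log θ * θ ^ (k + ν)) ν := by
  simpa using ((hasDerivAt_id ν).const_add k).const_rpow hθ

noncomputable def probNeverVaccinated (k θ ν : ℝ) : ℝ := (k + ν * θ ^ (k + ν)) / (k + ν)

noncomputable def probNeverVaccinatedDeriv (k θ ν : ℝ) : ℝ :=
  (k * (θ ^ (k + ν) - 1) + log θ * θ ^ (k + ν) * ν * (k + ν)) / (k + ν) ^ 2

noncomputable def probNeverVaccinatedDeriv2 (k θ ν : ℝ) : ℝ :=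
  (log θ ^ 2 * θ ^ (k + ν) * ν * (k + ν) ^ 2 +
    2 * k * (1 - θ ^ (k + ν) * (1 - log θ * (k + ν)))) / (k + ν) ^ 3

section

variable {k θ ν : ℝ}

lemma hasDerivAt_probNeverVaccinated (hθ : 0 < θ) (hν : k + ν ≠ 0) :
    HasDerivAt (probNeverVaccinated k θ) (probNeverVaccinatedDeriv k θ ν) ν := by
  have hnum := ((hasDerivAt_id ν).mul (hasDerivAt_rpow_const_add hθ k ν)).const_add k
  have hden := (hasDerivAt_id ν).const_add k
  refine (hnum.div hden hν).congr_deriv ?_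
  simp only [probNeverVaccinatedDeriv, Pi.mul_apply, id]
  field_simp
  ring

lemma hasDerivAt_probNeverVaccinatedDeriv (hθ : 0 < θ) (hν : k + ν ≠ 0) :
    HasDerivAt (probNeverVaccinatedDeriv k θ) (probNeverVaccinatedDeriv2 k θ ν) ν := by
  have hE := hasDerivAt_rpow_const_add hθ k ν
  have hden := (hasDerivAt_id ν).const_add k
  have hnum := (hE.sub_const 1).const_mul k |>.add
    (((hE.const_mul (log θ)).mul (hasDerivAt_id ν)).mul hden)
  refine (hnum.div (hden.pow 2) (pow_ne_zero 2 hν)).congr_deriv ?_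
  simp only [probNeverVaccinatedDeriv2, Pi.add_apply, Pi.mul_apply, Pi.pow_apply, id]
  field_simp
  ring

lemma probNeverVaccinatedDeriv2_nonneg (hθ : 0 < θ) (hk : 0 ≤ k) (hν : 0 ≤ ν) : 0 ≤ probNeverVaccinatedDeriv2 k θ ν := by
  have hexp : θ ^ (k + ν) * (1 - log θ * (k + ν)) ≤ 1 := by
    rw [rpow_def_of_pos hθ]; exact exp_mul_one_sub_le_one _
  unfold probNeverVaccinatedDeriv2
  have : 0 ≤ θ ^ (k + ν) := by positivity
  have : 0 ≤ 2 * k * (1 - θ ^ (k + ν) * (1 - log θ * (k + ν))) :=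
    mul_nonneg (by positivity) (by linarith)
  positivity

lemma convexOn_probNeverVaccinated (hθ : 0 < θ) (hk : 0 < k) :
    ConvexOn ℝ (Ici 0) (probNeverVaccinated k θ) := by
  have hne {ν : ℝ} (hν : 0 ≤ ν) : k + ν ≠ 0 := by positivity
  refine convexOn_of_hasDerivWithinAt2_nonneg (f' := probNeverVaccinatedDeriv k θ)
    (f'' := probNeverVaccinatedDeriv2 k θ) (convex_Ici 0)
    (fun ν hν ↦ (hasDerivAt_probNeverVaccinated hθ (hne hν)).continuousAt.continuousWithinAt)
    (fun ν hν ↦ ?_) (fun ν hν ↦ ?_) (fun ν hν ↦ ?_) <;> rw [interior_Ici] at hν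
  · exact (hasDerivAt_probNeverVaccinated hθ (hne hν.le)).hasDerivWithinAt
  · exact (hasDerivAt_probNeverVaccinatedDeriv hθ (hne hν.le)).hasDerivWithinAt
  · exact probNeverVaccinatedDeriv2_nonneg hθ hk.le hν.le

lemma probNeverVaccinatedDeriv_zero_neg (hθ0 : 0 < θ) (hθ1 : θ < 1) (hk : 0 < k) :
    probNeverVaccinatedDeriv k θ 0 < 0 := by
  have : θ ^ k < 1 := rpow_lt_one hθ0.le hθ1 hk
  simp only [probNeverVaccinatedDeriv, add_zero, mul_zero, zero_mul]
  exact div_neg_of_neg_of_pos (by nlinarith) (by positivity)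

end

theorem stmt_6_general (k : ℕ) (hk : 1 ≤ k) (θ : ℝ) (hθ0 : 0 < θ) (hθ1 : θ < 1)
    (α₁ α₂ c : ℝ) (hα₁ : 0 < α₁) (hα₂ : 0 < α₂) (hc0 : 0 < c)
    (f f' : ℝ → ℝ) (m : ℝ) (hm : 0 < m)
    (hf_strong : StrongConvexOn (Set.Ici 0) m f)
    (hf' : ∀ μ : ℝ, 0 ≤ μ → HasDerivAt f (f' μ) μ)
    (hf'0 : f' 0 = 0)
    (h : ℝ → ℝ)
    (hh : ∀ μ : ℝ, h μ = α₁ * f' μ +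
      α₂ * c * deriv (fun ν : ℝ => ((k : ℝ) + ν * θ ^ ((k : ℝ) + ν)) / ((k : ℝ) + ν)) μ) :
    ∃! μtilde : ℝ, μtilde ∈ Set.Ioi (0 : ℝ) ∧ h μtilde = 0 := by
  have hk0 : (0 : ℝ) < k := by exact_mod_cast hk
  have hP (μ : ℝ) (hμ : μ ∈ Ici 0) :
      HasDerivAt (probNeverVaccinated k θ) (probNeverVaccinatedDeriv k θ μ) μ :=
    hasDerivAt_probNeverVaccinated hθ0 (by positivity [mem_Ici.1 hμ])
  have hh' (μ : ℝ) (hμ : μ ∈ Ici 0) :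
      h μ = α₁ * f' μ + α₂ * c * probNeverVaccinatedDeriv k θ μ := by
    rw [hh, ← (hP μ hμ).deriv]; rfl
  have hcost : StrongConvexOn (Ici 0) (α₁ * m) (α₁ • f + (α₂ * c) • probNeverVaccinated k θ) :=
    (hf_strong.const_smul hα₁.le).add_convexOn
      ((convexOn_probNeverVaccinated hθ0 hk0).smul (by positivity))
  have hcost' (μ : ℝ) (hμ : μ ∈ Ici 0) :
      HasDerivAt (α₁ • f + (α₂ * c) • probNeverVaccinated k θ) (h μ) μ := by
    rw [hh' μ hμ]
    exact ((hf' μ hμ).const_mul α₁).add ((hP μ hμ).const_mul (α₂ * c))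
  have h0 : h 0 < 0 := by
    rw [hh' 0 self_mem_Ici, hf'0, mul_zero, zero_add]
    exact mul_neg_of_pos_of_neg (by positivity) (probNeverVaccinatedDeriv_zero_neg hθ0 hθ1 hk0)
  exact hcost.existsUnique_hasDerivAt_eq_zero (by positivity) hcost' h0

/-- For f strongly convex and C¹ with f'(0) = 0, the first-order condition
h(μ) = α₁ f'(μ) + α₂ c ∂_μ[(k + μ θ^{k+μ})/(k + μ)] = 0 has a unique solution in (0,∞). -/
theorem stmt_6 (k : ℕ) (hk : 1 ≤ k) (θ : ℝ) (hθ0 : 0 < θ) (hθ1 : θ < 1)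
    (α₁ α₂ c : ℝ) (hα₁ : 0 < α₁) (hα₂ : 0 < α₂) (hc0 : 0 < c) (hc1 : c ≤ 1)
    (f f' : ℝ → ℝ) (m : ℝ) (hm : 0 < m)
    (hf_strong : StrongConvexOn (Set.Ici 0) m f)
    (hf' : ∀ μ : ℝ, 0 ≤ μ → HasDerivAt f (f' μ) μ)
    (hf'_cont : ContinuousOn f' (Set.Ici 0))
    (hf'0 : f' 0 = 0)
    (h : ℝ → ℝ)
    (hh : ∀ μ : ℝ, h μ = α₁ * f' μ +
      α₂ * c * deriv (fun ν : ℝ => ((k : ℝ) + ν * θ ^ ((k : ℝ) + ν)) / ((k : ℝ) + ν)) μ) :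
    ∃! μtilde : ℝ, μtilde ∈ Set.Ioi (0 : ℝ) ∧ h μtilde = 0 :=
  stmt_6_general k hk θ hθ0 hθ1 α₁ α₂ c hα₁ hα₂ hc0 f f' m hm hf_strong hf' hf'0 h hh
end

section
/- Let g(x) = Σ_{k=0}^K p_k x^k be a polynomial probability generating function with g''(1) > 0, let T ∈ (0,1], and M ∈ [0,1), and suppose T(1−M) g''(1)/g'(1) > 1. Then the self-consistency map H(y) = g₁'(1 + (y−1)T)/g₁'(1), where g₁(x) = g(x(1−M)+M), has a fixed point y* ∈ [0,1). -/
/-!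
By the chain rule the factor `1 - M` cancels from `H`, leaving `H y = g' (1 + (y - 1) τ) / g' 1`
with `τ = T (1 - M)`. So `H 1 = 1` and the slope of `H` at `1` is `τ g''(1) / g'(1) > 1`.
So `H y < y` just left of `1`, while `H 0 ≥ 0` because `g'` has nonnegative coefficients and
`1 - τ ≥ 0`. The intermediate value theorem applied to `H y - y` on `[0, y₀]` gives the fixed point.
-/

open Filter Topology Set Finset

theorem eventually_lt_self_of_hasDerivAt {H : ℝ → ℝ} {b d : ℝ} (hd : HasDerivAt H d b)
    (hb : H b = b) (hd1 : 1 < d) : ∀ᶠ y in 𝓝[<] b, H y < y := by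
  have hslope : ∀ᶠ y in 𝓝[<] b, 1 < slope H b y :=
    (hasDerivAt_iff_tendsto_slope_left_right.mp hd).1.eventually (eventually_gt_nhds hd1)
  filter_upwards [hslope, self_mem_nhdsWithin] with y hy hyb
  have hneg : y - b < 0 := sub_neg.mpr hyb
  rw [slope_def_field, hb, lt_div_iff_of_neg hneg] at hy
  linarith

theorem exists_mem_Ico_map_eq_self_of_one_lt_deriv {H : ℝ → ℝ} {a b d : ℝ} (hab : a < b)
    (hcont : ContinuousOn H (Icc a b)) (ha : a ≤ H a) (hb : H b = b) (hd : HasDerivAt H d b)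
    (hd1 : 1 < d) : ∃ y ∈ Ico a b, H y = y := by
  obtain ⟨y₀, hy₀, hy₀b⟩ :=
    ((eventually_lt_self_of_hasDerivAt hd hb hd1).and (Ioo_mem_nhdsLT hab)).exists
  have hcont₀ : ContinuousOn (fun y => H y - y) (Icc a y₀) :=
    ((hcont.mono (Icc_subset_Icc_right hy₀b.2.le)).sub continuousOn_id)
  have hzero : (0 : ℝ) ∈ Icc (H y₀ - y₀) (H a - a) := ⟨by linarith, by linarith⟩
  obtain ⟨y, hy, hfix⟩ := intermediate_value_Icc' hy₀b.1.le hcont₀ hzero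
  exact ⟨y, ⟨hy.1, hy.2.trans_lt hy₀b.2⟩, sub_eq_zero.mp hfix⟩

theorem exists_fixedPoint_div_comp_affine {G : ℝ → ℝ} {τ : ℝ} (hG : Differentiable ℝ G)
    (hG1 : 0 < G 1) (hG0 : 0 ≤ G (1 - τ)) (hτ : 1 < τ * deriv G 1 / G 1) :
    ∃ y ∈ Ico (0 : ℝ) 1, G (1 + (y - 1) * τ) / G 1 = y := by
  have hd : HasDerivAt (fun y => G (1 + (y - 1) * τ) / G 1) (deriv G 1 * τ / G 1) 1 := by
    have haff : HasDerivAt (fun y : ℝ => 1 + (y - 1) * τ) τ 1 := by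
      simpa using (((hasDerivAt_id (1 : ℝ)).sub_const 1).mul_const τ).const_add 1
    exact ((hG 1).hasDerivAt.comp_of_eq 1 haff (by ring)).div_const (G 1)
  have hcont : Continuous fun y => G (1 + (y - 1) * τ) / G 1 := by
    have := hG.continuous
    fun_prop
  refine exists_mem_Ico_map_eq_self_of_one_lt_deriv zero_lt_one hcont.continuousOn ?_ ?_ hd
    (by rwa [mul_comm])
  · rw [show (1 : ℝ) + (0 - 1) * τ = 1 - τ by ring]
    exact div_nonneg hG0 hG1.le
  · simp [hG1.ne']

section PowerSum

variable {s : Finset ℕ} {p : ℕ → ℝ} {g : ℝ → ℝ} (hg : ∀ x, g x = ∑ k ∈ s, p k * x ^ k)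
include hg

theorem hasDerivAt_of_eq_sum_mul_pow (x : ℝ) :
    HasDerivAt g (∑ k ∈ s, p k * (k * x ^ (k - 1))) x := by
  rw [show g = _ from funext hg]
  exact HasDerivAt.fun_sum fun k _ => (hasDerivAt_pow k x).const_mul (p k)

theorem deriv_of_eq_sum_mul_pow : deriv g = fun x => ∑ k ∈ s, p k * (k * x ^ (k - 1)) :=
  funext fun x => (hasDerivAt_of_eq_sum_mul_pow hg x).deriv

theorem differentiable_of_eq_sum_mul_pow : Differentiable ℝ g :=
  fun x => (hasDerivAt_of_eq_sum_mul_pow hg x).differentiableAt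

theorem differentiable_deriv_of_eq_sum_mul_pow : Differentiable ℝ (deriv g) := by
  rw [deriv_of_eq_sum_mul_pow hg]
  fun_prop

theorem deriv_nonneg_of_eq_sum_mul_pow (hp : ∀ k ∈ s, 0 ≤ p k) {x : ℝ} (hx : 0 ≤ x) :
    0 ≤ deriv g x := by
  rw [deriv_of_eq_sum_mul_pow hg]
  exact sum_nonneg fun k hk => mul_nonneg (hp k hk) (by positivity)

end PowerSum

theorem deriv_comp_mul_add_const {f : ℝ → ℝ} (hf : Differentiable ℝ f) (c m x : ℝ) :
    deriv (fun x => f (x * c + m)) x = deriv f (x * c + m) * c := by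
  have haff : HasDerivAt (fun x : ℝ => x * c + m) c x := by
    simpa using ((hasDerivAt_id x).mul_const c).add_const m
  exact ((hf _).hasDerivAt.comp x haff).deriv

open Finset in
theorem stmt_7_general (K : ℕ) (p : ℕ → ℝ) (hp : ∀ k, 0 ≤ p k)
    (g : ℝ → ℝ) (hg : ∀ x, g x = ∑ k ∈ Finset.range (K + 1), p k * x ^ k)
    (hg' : 0 < deriv g 1)
    (T M : ℝ) (hT1 : T ≤ 1) (hM0 : 0 ≤ M) (hM1 : M < 1)
    (hsuper : 1 < T * (1 - M) * deriv (deriv g) 1 / deriv g 1)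
    (g₁ : ℝ → ℝ) (hg₁ : ∀ x, g₁ x = g (x * (1 - M) + M))
    (H : ℝ → ℝ) (hH : ∀ y, H y = deriv g₁ (1 + (y - 1) * T) / deriv g₁ 1) :
    ∃ ystar ∈ Set.Ico (0 : ℝ) 1, H ystar = ystar := by
  obtain rfl : g₁ = fun x => g (x * (1 - M) + M) := funext hg₁
  have hM : 0 < 1 - M := sub_pos.mpr hM1
  have hH_eq : H = fun y => deriv g (1 + (y - 1) * (T * (1 - M))) / deriv g 1 := by
    funext y
    rw [hH, deriv_comp_mul_add_const (differentiable_of_eq_sum_mul_pow hg),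
      deriv_comp_mul_add_const (differentiable_of_eq_sum_mul_pow hg), mul_div_mul_right _ _ hM.ne']
    ring_nf
  have hG0 : 0 ≤ deriv g (1 - T * (1 - M)) :=
    deriv_nonneg_of_eq_sum_mul_pow hg (fun k _ => hp k) (by nlinarith)
  rw [hH_eq]
  exact exists_fixedPoint_div_comp_affine (differentiable_deriv_of_eq_sum_mul_pow hg) hg' hG0 hsuper

open Finset in
/-- Supercritical case (T > T_c): the self-consistency map
H(y) = g₁'(1+(y−1)T)/g₁'(1), with g₁(x) = g(x(1−M)+M), has a fixed point in [0,1). -/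
theorem stmt_7 (K : ℕ) (p : ℕ → ℝ) (hp : ∀ k, 0 ≤ p k)
    (hsum : ∑ k ∈ Finset.range (K + 1), p k = 1)
    (g : ℝ → ℝ) (hg : ∀ x, g x = ∑ k ∈ Finset.range (K + 1), p k * x ^ k)
    (hg'' : 0 < deriv (deriv g) 1) (hg' : 0 < deriv g 1)
    (T M : ℝ) (hT0 : 0 < T) (hT1 : T ≤ 1) (hM0 : 0 ≤ M) (hM1 : M < 1)
    (hsuper : 1 < T * (1 - M) * deriv (deriv g) 1 / deriv g 1)
    (g₁ : ℝ → ℝ) (hg₁ : ∀ x, g₁ x = g (x * (1 - M) + M))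
    (H : ℝ → ℝ) (hH : ∀ y, H y = deriv g₁ (1 + (y - 1) * T) / deriv g₁ 1) :
    ∃ ystar ∈ Set.Ico (0 : ℝ) 1, H ystar = ystar :=
  stmt_7_general K p hp g hg hg' T M hT1 hM0 hM1 hsuper g₁ hg₁ H hH
end

section
/- Let θ ∈ (0,1) and c ∈ (0,1], α₁, α₂ > 0, and f(μ) = μ^b with b ≥ 2. For each integer k ≥ 1 let μ*(k) be the unique minimizer of E_k(μ) = α₁ μ^b + α₂ c (k + μθ^{k+μ})/(k+μ) over μ ≥ 0. Then μ*(k) > 0 for every k. -/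
/-!
Writing `E(μ) - E(0) = μ · g(μ)` with
`g(μ) = α₁ μ^(b-1) - α₂ c (1 - θ^(k+μ)) / (k+μ)`, the slope `g` is continuous at `0`
(as `b > 1`) with `g(0) = -α₂ c (1 - θ^k) / k < 0`. Hence `E(μ) < E(0)` for small `μ > 0`,
so `0` is not a minimizer.
-/

open Set Filter Topology

theorem not_isMinOn_Ici_of_slope_neg {E g : ℝ → ℝ} {a : ℝ}
    (hg : ContinuousWithinAt g (Ioi a) a) (hga : g a < 0)
    (hE : ∀ μ, a < μ → E μ - E a = (μ - a) * g μ) :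
    ¬ IsMinOn E (Ici a) a := by
  intro hmin
  obtain ⟨μ, hgμ, haμ⟩ :=
    ((hg.eventually_lt continuousWithinAt_const hga).and self_mem_nhdsWithin).exists
  have hdrop : E μ - E a < 0 := by
    rw [hE μ haμ]
    exact mul_neg_of_pos_of_neg (sub_pos.mpr haμ) hgμ
  linarith [isMinOn_iff.mp hmin μ (mem_Ici.mpr haμ.le)]

section VaccinationCost

variable (α₁ α₂ c θ b K : ℝ)

noncomputable def vaccinationCost (μ : ℝ) : ℝ :=
  α₁ * μ ^ b + α₂ * c * ((K + μ * θ ^ (K + μ)) / (K + μ))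

noncomputable def vaccinationCostSlope (μ : ℝ) : ℝ :=
  α₁ * μ ^ (b - 1) - α₂ * c * (1 - θ ^ (K + μ)) / (K + μ)

variable {α₁ α₂ c θ b K}

theorem vaccinationCost_sub_zero (hb : b ≠ 0) (hK : 0 < K) {μ : ℝ} (hμ : 0 < μ) :
    vaccinationCost α₁ α₂ c θ b K μ - vaccinationCost α₁ α₂ c θ b K 0 =
      μ * vaccinationCostSlope α₁ α₂ c θ b K μ := by
  have hKμ : K + μ ≠ 0 := by positivity
  rw [vaccinationCost, vaccinationCost, vaccinationCostSlope, Real.zero_rpow hb,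
    Real.rpow_sub_one hμ.ne']
  field_simp
  ring

theorem continuousAt_vaccinationCostSlope (hb : 1 < b) (hθ : θ ≠ 0) (hK : K ≠ 0) :
    ContinuousAt (vaccinationCostSlope α₁ α₂ c θ b K) 0 := by
  unfold vaccinationCostSlope
  have hpow : ContinuousAt (fun μ : ℝ => μ ^ (b - 1)) 0 :=
    Real.continuousAt_rpow_const _ _ (Or.inr (by linarith))
  have hexp : ContinuousAt (fun μ : ℝ => θ ^ (K + μ)) 0 :=
    (Real.continuousAt_const_rpow hθ).comp (continuousAt_const.add continuousAt_id)
  exact (continuousAt_const.mul hpow).sub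
    ((continuousAt_const.mul (continuousAt_const.sub hexp)).div
      (continuousAt_const.add continuousAt_id) (by simpa using hK))

theorem vaccinationCostSlope_zero_neg (hb : 1 < b) (hα₂ : 0 < α₂) (hc : 0 < c)
    (hθ0 : 0 ≤ θ) (hθ1 : θ < 1) (hK : 0 < K) :
    vaccinationCostSlope α₁ α₂ c θ b K 0 < 0 := by
  have hθK : θ ^ K < 1 := Real.rpow_lt_one hθ0 hθ1 hK
  have hgain : 0 < α₂ * c * (1 - θ ^ K) / K := by
    have : 0 < 1 - θ ^ K := by linarith
    positivity
  rw [vaccinationCostSlope, Real.zero_rpow (by linarith), add_zero]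
  linarith

theorem vaccinationCost_not_isMinOn_zero (hb : 1 < b) (hα₂ : 0 < α₂) (hc : 0 < c)
    (hθ0 : 0 < θ) (hθ1 : θ < 1) (hK : 0 < K) :
    ¬ IsMinOn (vaccinationCost α₁ α₂ c θ b K) (Ici 0) 0 :=
  not_isMinOn_Ici_of_slope_neg
    (continuousAt_vaccinationCostSlope hb hθ0.ne' hK.ne').continuousWithinAt
    (vaccinationCostSlope_zero_neg hb hα₂ hc hθ0.le hθ1 hK)
    fun μ hμ => by rw [sub_zero]; exact vaccinationCost_sub_zero (by linarith) hK hμ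

end VaccinationCost

theorem stmt_16_general (θ : ℝ) (hθ0 : 0 < θ) (hθ1 : θ < 1)
    (c : ℝ) (hc0 : 0 < c)
    (α₁ α₂ : ℝ) (hα₂ : 0 < α₂)
    (b : ℝ) (hb : 2 ≤ b)
    (E : ℕ → ℝ → ℝ)
    (hE : ∀ (k : ℕ) (μ : ℝ), E k μ =
      α₁ * μ ^ b + α₂ * c * (((k : ℝ) + μ * θ ^ ((k : ℝ) + μ)) / ((k : ℝ) + μ))) :
    ∀ k : ℕ, 1 ≤ k → ∀ μstar : ℝ, μstar ∈ Set.Ici (0 : ℝ) →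
      IsMinOn (E k) (Set.Ici 0) μstar → 0 < μstar := by
  intro k hk μstar hmem hmin
  have hEk : E k = vaccinationCost α₁ α₂ c θ b k := funext (hE k)
  rcases (mem_Ici.mp hmem).eq_or_lt with rfl | hpos
  · rw [hEk] at hmin
    exact absurd hmin (vaccinationCost_not_isMinOn_zero (by linarith) hα₂ hc0 hθ0 hθ1
      (by exact_mod_cast hk))
  · exact hpos

/-- With polynomial vaccine-phobia penalty f(μ) = μ^b, b ≥ 2, any minimizer over
[0,∞) of E_k(μ) = α₁ μ^b + α₂ c (k + μθ^{k+μ})/(k+μ) is strictly positive. -/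
theorem stmt_16 (θ : ℝ) (hθ0 : 0 < θ) (hθ1 : θ < 1)
    (c : ℝ) (hc0 : 0 < c) (hc1 : c ≤ 1)
    (α₁ α₂ : ℝ) (hα₁ : 0 < α₁) (hα₂ : 0 < α₂)
    (b : ℝ) (hb : 2 ≤ b)
    (E : ℕ → ℝ → ℝ)
    (hE : ∀ (k : ℕ) (μ : ℝ), E k μ =
      α₁ * μ ^ b + α₂ * c * (((k : ℝ) + μ * θ ^ ((k : ℝ) + μ)) / ((k : ℝ) + μ))) :
    ∀ k : ℕ, 1 ≤ k → ∀ μstar : ℝ, μstar ∈ Set.Ici (0 : ℝ) →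
      IsMinOn (E k) (Set.Ici 0) μstar → 0 < μstar :=
  stmt_16_general θ hθ0 hθ1 c hc0 α₁ α₂ hα₂ b hb E hE
end
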